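/- arXiv:math/0702412 — 4 statements merged into one kernel-verified Lean document; each statement's English description precedes it below -/
import Mathlib

section
/- Let P be a ϕ-irreducible Markov transition kernel on a measurable space (X, F) with stationary probability distribution π. Suppose there exists a small set C ∈ F, i.e., π(C) > 0 and there exist ε > 0 and a probability measure ν on (X, F) with P(x, A) ≥ ε ν(A) for all A ∈ F and all x ∈ C, such that P[X_n ∈ C infinitely often | X_0 = x] = 1 for all x ∈ X. Then the chain is Harris recurrent. -/
open MeasureTheory ProbabilityTheory Filter Set ENNReal

namespace MCMCHarris

variable {X : Type*} [MeasurableSpace X]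

/-- The `n`-step transition kernel `P^n`. -/
noncomputable def iterK (P : Kernel X X) : ℕ → Kernel X X
  | 0 => Kernel.id
  | n + 1 => (iterK P n).comp P

/-- `hitLE P A n x` is the probability `P[τ_A ≤ n | X₀ = x]` that the chain started at `x`
hits `A` within the first `n` steps, where `τ_A = inf {n ≥ 1 : Xₙ ∈ A}`. -/
noncomputable def hitLE (P : Kernel X X) (A : Set X) : ℕ → X → ℝ≥0∞
  | 0 => fun _ => 0
  | n + 1 => fun x => ∫⁻ y, (A.indicator (fun _ => 1) y + Aᶜ.indicator (hitLE P A n) y) ∂(P x)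

/-- `hitProb P A x` is the probability `P[τ_A < ∞ | X₀ = x]`. -/
noncomputable def hitProb (P : Kernel X X) (A : Set X) (x : X) : ℝ≥0∞ :=
  ⨆ n, hitLE P A n x

/-- `stayLE P A n x` is the probability `P[X_k ∈ A for all 1 ≤ k ≤ n | X₀ = x]`. -/
noncomputable def stayLE (P : Kernel X X) (A : Set X) : ℕ → X → ℝ≥0∞
  | 0 => fun _ => 1
  | n + 1 => fun x => ∫⁻ y, A.indicator (stayLE P A n) y ∂(P x)

/-- `stayProb P A x` is the probability `P[Xₙ ∈ A for all n ≥ 0 | X₀ = x]`. -/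
noncomputable def stayProb (P : Kernel X X) (A : Set X) (x : X) : ℝ≥0∞ :=
  A.indicator (fun x' => ⨅ n, stayLE P A n x') x

/-- `ioProb P A x` is the probability `P[Xₙ ∈ A infinitely often | X₀ = x]`. -/
noncomputable def ioProb (P : Kernel X X) (A : Set X) (x : X) : ℝ≥0∞ :=
  ⨅ N, ∫⁻ y, hitProb P A y ∂(iterK P N x)

/-- `pathProb P g` is the probability `P[Xₙ = g n for all n | X₀ = g 0]` that the chain
started at `g 0` follows the deterministic trajectory `g`. -/
noncomputable def pathProb (P : Kernel X X) (g : ℕ → X) : ℝ≥0∞ :=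
  ⨅ N, ∏ n ∈ Finset.range N, P (g n) {g (n + 1)}

/-- Total variation distance between two measures. -/
noncomputable def tvDist (μ ν : Measure X) : ℝ :=
  ⨆ A : {A : Set X // MeasurableSet A}, |(μ A).toReal - (ν A).toReal|

/-- `π` is a stationary distribution for the kernel `P`. -/
def Stationary (P : Kernel X X) (π : Measure X) : Prop :=
  ∀ A : Set X, MeasurableSet A → ∫⁻ x, P x A ∂π = π A

/-- The chain `P`, started from any point of `S`, is `φ`-irreducible. -/
def IrreducibleOn (P : Kernel X X) (φ : Measure X) (S : Set X) : Prop :=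
  φ ≠ 0 ∧ ∀ x ∈ S, ∀ A : Set X, MeasurableSet A → 0 < φ A → 0 < hitProb P A x

/-- The chain `P` is `φ`-irreducible (from every point of `S`) for some nonzero σ-finite `φ`. -/
def PhiIrreducibleOn (P : Kernel X X) (S : Set X) : Prop :=
  ∃ φ : Measure X, SigmaFinite φ ∧ IrreducibleOn P φ S

/-- Harris recurrence (for starting points in `S`): every set of positive `π`-measure is
reached in finite time with probability one from every `x ∈ S`. -/
def HarrisRecurrentOn (P : Kernel X X) (π : Measure X) (S : Set X) : Prop :=
  ∀ A : Set X, MeasurableSet A → 0 < π A → ∀ x ∈ S, hitProb P A x = 1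

/-- There is a `D`-cycle: disjoint sets `C 0, …, C (D-1)` of positive `π`-measure through
which the chain cycles with probability one. -/
def HasCycle (P : Kernel X X) (π : Measure X) (D : ℕ) : Prop :=
  ∃ C : ℕ → Set X, (∀ i < D, MeasurableSet (C i)) ∧
    (∀ i < D, ∀ j < D, i ≠ j → Disjoint (C i) (C j)) ∧
    (∀ i < D, 0 < π (C i)) ∧
    ∀ i < D, ∀ x ∈ C i, P x (C ((i + 1) % D)) = 1

/-- The period of the chain is `D`: `D` is the largest positive integer admitting a `D`-cycle. -/
def IsPeriod (P : Kernel X X) (π : Measure X) (D : ℕ) : Prop :=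
  0 < D ∧ HasCycle P π D ∧ ∀ D' : ℕ, 0 < D' → HasCycle P π D' → D' ≤ D

/-- The chain is aperiodic: its period is `1`. -/
def Aperiodic (P : Kernel X X) (π : Measure X) : Prop :=
  IsPeriod P π 1

/-- The Cesàro average `(1/D) ∑_{r=1}^D P^{nD+r}(x, ·)`. -/
noncomputable def cesaro (P : Kernel X X) (D n : ℕ) (x : X) : Measure X :=
  (D : ℝ≥0∞)⁻¹ • ∑ r ∈ Finset.range D, iterK P (n * D + (r + 1)) x

end MCMCHarris

open MCMCHarris MeasureTheory ProbabilityTheory Filter Set ENNReal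

/-!
Let `β` be the infimum over `C` of the probability of ever reaching `A`. Since `C` is reached
almost surely from every state, the strong Markov property at the first visit to `C` shows that
`A` is reached with probability at least `β` from every state. Splitting `P(y, ·)` as
`(P(y, ·) - ε ν) + ε ν` for `y ∈ C` shows that the `ν`-average of the probability of entering `A`
is at most `β`, so this entrance probability equals its lower bound `β` `ν`-almost everywhere.
If `β < 1`, the level set `E` where it equals `β` is therefore nonempty, absorbing and disjoint
from `A`. Irreducibility makes `E` reachable from every state, and stationarity then forces
`π Eᶜ = 0`, contradicting `π A > 0`.
-/

namespace MCMCHarris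

variable {X : Type*} [MeasurableSpace X]

theorem ae_eq_of_forall_le_of_lintegral_le {μ : Measure X} [IsProbabilityMeasure μ]
    {f : X → ℝ≥0∞} (hf : Measurable f) {c : ℝ≥0∞} (hc : c ≠ ∞) (hcf : ∀ z, c ≤ f z)
    (hint : ∫⁻ z, f z ∂μ ≤ c) : ∀ᵐ z ∂μ, f z = c :=
  (ae_eq_of_ae_le_of_lintegral_le (ae_of_all _ hcf) (by simpa using hc) hf.aemeasurable
    (by simpa using hint)).mono fun _ hz => hz.symm

/-- `∫ g dρ ≥ (1 - ε) β + ε ∫ g dν`, from `ρ = (ρ - ε • ν) + ε • ν`, stated without truncated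
subtraction. -/
theorem add_mul_lintegral_le_of_smul_le {ρ ν : Measure X} [IsProbabilityMeasure ρ]
    [IsProbabilityMeasure ν] {ε β : ℝ≥0∞} (hle : ε • ν ≤ ρ) {g : X → ℝ≥0∞} (hg : ∀ z, β ≤ g z) :
    β + ε * ∫⁻ z, g z ∂ν ≤ ∫⁻ z, g z ∂ρ + ε * β := by
  have := isFiniteMeasure_of_le ρ hle
  have hdec : ρ - ε • ν + ε • ν = ρ := Measure.sub_add_cancel_of_le hle
  have hmass : (ρ - ε • ν) univ + ε = 1 := by
    simpa using congrArg (fun μ : Measure X => μ univ) hdec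
  calc β + ε * ∫⁻ z, g z ∂ν = β * (ρ - ε • ν) univ + ε * ∫⁻ z, g z ∂ν + ε * β := by
        conv_lhs => rw [← mul_one β, ← hmass]
        ring
    _ ≤ ∫⁻ z, g z ∂(ρ - ε • ν) + ε * ∫⁻ z, g z ∂ν + ε * β := by
        gcongr
        exact (lintegral_const β).symm.trans_le (lintegral_mono hg)
    _ = ∫⁻ z, g z ∂ρ + ε * β := by
        conv_rhs => rw [← hdec, lintegral_add_measure, lintegral_smul_measure, smul_eq_mul]

section Hitting

variable (P : Kernel X X) {A : Set X}

theorem measurable_hitLE (hA : MeasurableSet A) (n : ℕ) : Measurable (hitLE P A n) := by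
  induction n with
  | zero => exact measurable_const
  | succ n ih =>
    exact ((measurable_const.indicator hA).add (ih.indicator hA.compl)).lintegral_kernel

theorem hitLE_le_one [IsMarkovKernel P] (n : ℕ) (x : X) : hitLE P A n x ≤ 1 := by
  induction n generalizing x with
  | zero => exact zero_le_one
  | succ n ih =>
    refine (lintegral_mono fun y => ?_).trans_eq ((lintegral_one).trans measure_univ)
    by_cases hy : y ∈ A <;> simp [hy, ih y]

theorem hitLE_le_hitLE_succ (n : ℕ) (x : X) : hitLE P A n x ≤ hitLE P A (n + 1) x := by
  induction n generalizing x with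
  | zero => exact zero_le
  | succ n ih =>
    refine lintegral_mono fun y => ?_
    by_cases hy : y ∈ A <;> simp [hy, ih y]

theorem monotone_hitLE (x : X) : Monotone fun n => hitLE P A n x :=
  monotone_nat_of_le_succ fun n => hitLE_le_hitLE_succ P n x

theorem measurable_hitProb (hA : MeasurableSet A) : Measurable (hitProb P A) :=
  .iSup fun n => measurable_hitLE P hA n

theorem hitProb_le_one [IsMarkovKernel P] (x : X) : hitProb P A x ≤ 1 :=
  iSup_le fun n => hitLE_le_one P n x

theorem ioProb_le_hitProb (hA : MeasurableSet A) (x : X) : ioProb P A x ≤ hitProb P A x :=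
  calc ioProb P A x ≤ ∫⁻ y, hitProb P A y ∂(iterK P 0 x) := iInf_le _ 0
    _ = hitProb P A x := by
      rw [iterK, Kernel.id_apply, lintegral_dirac' x (measurable_hitProb P hA)]

/-- `P[σ_A < ∞ | X₀ = y]` for the first entrance time `σ_A = inf {n ≥ 0 : Xₙ ∈ A}`. -/
noncomputable def entryProb (P : Kernel X X) (A : Set X) (y : X) : ℝ≥0∞ :=
  A.indicator 1 y + Aᶜ.indicator (hitProb P A) y

theorem entryProb_of_mem {y : X} (hy : y ∈ A) : entryProb P A y = 1 := by
  simp [entryProb, hy]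

theorem entryProb_of_notMem {y : X} (hy : y ∉ A) : entryProb P A y = hitProb P A y := by
  simp [entryProb, hy]

theorem measurable_entryProb (hA : MeasurableSet A) : Measurable (entryProb P A) :=
  (measurable_const.indicator hA).add ((measurable_hitProb P hA).indicator hA.compl)

theorem hitProb_le_entryProb [IsMarkovKernel P] (y : X) : hitProb P A y ≤ entryProb P A y := by
  by_cases hy : y ∈ A
  · simpa [entryProb_of_mem P hy] using hitProb_le_one P y
  · rw [entryProb_of_notMem P hy]

theorem hitProb_eq_lintegral_entryProb (hA : MeasurableSet A) (x : X) :
    hitProb P A x = ∫⁻ y, entryProb P A y ∂(P x) := by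
  rw [hitProb, ← (monotone_hitLE P x).iSup_nat_add 1]
  refine (lintegral_iSup (fun n => ?_) fun m n hmn y => ?_).symm.trans
    (lintegral_congr fun y => ?_)
  · exact (measurable_const.indicator hA).add ((measurable_hitLE P hA n).indicator hA.compl)
  · by_cases hy : y ∈ A <;> simp [hy, monotone_hitLE P y hmn]
  · by_cases hy : y ∈ A <;> simp [hy, entryProb, hitProb]

theorem mul_hitProb_le_hitProb [IsMarkovKernel P] (hA : MeasurableSet A) {C : Set X} {β : ℝ≥0∞}
    (hβ : ∀ y ∈ C, β ≤ hitProb P A y) (x : X) : β * hitProb P C x ≤ hitProb P A x := by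
  rw [hitProb, ENNReal.mul_iSup]
  refine iSup_le fun n => ?_
  induction n generalizing x with
  | zero => simp [hitLE]
  | succ n ih =>
    rw [hitLE, hitProb_eq_lintegral_entryProb P hA]
    refine (lintegral_const_mul_le _ _).trans (lintegral_mono fun y => ?_)
    by_cases hy : y ∈ C
    · simpa [hy] using (hβ y hy).trans (hitProb_le_entryProb P y)
    · simpa [hy] using (ih y).trans (hitProb_le_entryProb P y)

end Hitting

def IsAbsorbing (P : Kernel X X) (E : Set X) : Prop :=
  ∀ x ∈ E, ∀ᵐ y ∂(P x), y ∈ E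

section Absorbing

variable {P : Kernel X X} {E : Set X}

theorem IsAbsorbing.hitLE_eq_zero (hE : IsAbsorbing P E) {D : Set X} (hED : Disjoint E D)
    (n : ℕ) {x : X} (hx : x ∈ E) : hitLE P D n x = 0 := by
  induction n generalizing x with
  | zero => rfl
  | succ n ih =>
    refine (lintegral_congr_ae ?_).trans lintegral_zero
    filter_upwards [hE x hx] with y hy
    simp [hED.notMem_of_mem_left hy, ih hy]

theorem IsAbsorbing.hitProb_eq_zero (hE : IsAbsorbing P E) {D : Set X} (hED : Disjoint E D)
    {x : X} (hx : x ∈ E) : hitProb P D x = 0 :=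
  iSup_eq_zero.2 fun n => hE.hitLE_eq_zero hED n hx

theorem IrreducibleOn.measure_pos_of_isAbsorbing {φ : Measure X} (hφ : IrreducibleOn P φ univ)
    (hEm : MeasurableSet E) (hE : IsAbsorbing P E) (hne : E.Nonempty) : 0 < φ E := by
  obtain ⟨x, hx⟩ := hne
  have hEc : φ Eᶜ = 0 := by
    by_contra hpos
    have := hφ.2 x trivial Eᶜ hEm.compl (pos_iff_ne_zero.2 hpos)
    exact this.ne' (hE.hitProb_eq_zero disjoint_compl_right hx)
  refine pos_iff_ne_zero.2 fun h0 => hφ.1 ?_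
  rw [← Measure.measure_univ_eq_zero, ← union_compl_self E]
  exact measure_union_null h0 hEc

variable {π : Measure X}

theorem Stationary.ae_ae_of_ae (hπ : Stationary P π) {p : X → Prop}
    (hp : MeasurableSet {y | p y}) (h : ∀ᵐ y ∂π, p y) : ∀ᵐ x ∂π, ∀ᵐ y ∂(P x), p y := by
  rw [ae_iff] at h
  have hint := (hπ _ hp.compl).trans h
  filter_upwards [(lintegral_eq_zero_iff (P.measurable_coe hp.compl)).1 hint] with x hx
  exact ae_iff.2 hx

theorem Stationary.ae_eq_zero_of_isAbsorbing [IsMarkovKernel P] [IsFiniteMeasure π]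
    (hπ : Stationary P π) (hEm : MeasurableSet E) (hE : IsAbsorbing P E) :
    ∀ᵐ x ∂π, x ∉ E → P x E = 0 := by
  have hsplit := hπ E hEm
  rw [← lintegral_add_compl _ hEm,
    setLIntegral_congr_fun hEm fun x hx => (prob_compl_eq_zero_iff hEm).1 (hE x hx),
    setLIntegral_const, one_mul] at hsplit
  have hout : ∫⁻ x in Eᶜ, P x E ∂π = 0 :=
    (ENNReal.add_right_inj (measure_ne_top π E)).1 (hsplit.trans (add_zero _).symm)
  exact (setLIntegral_eq_zero_iff hEm.compl (P.measurable_coe hEm)).1 hout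

theorem Stationary.ae_hitLE_eq_zero_of_isAbsorbing [IsMarkovKernel P] [IsFiniteMeasure π]
    (hπ : Stationary P π) (hEm : MeasurableSet E) (hE : IsAbsorbing P E) (n : ℕ) :
    ∀ᵐ x ∂π, x ∉ E → hitLE P E n x = 0 := by
  induction n with
  | zero => exact ae_of_all _ fun _ _ => rfl
  | succ n ih =>
    have hmeas : MeasurableSet {y | y ∉ E → hitLE P E n y = 0} :=
      measurableSet_setOfPred.2 <| (measurableSet_setOfPred.1 hEm.compl).imp
        (measurableSet_setOfPred.1 (measurable_hitLE P hEm n (measurableSet_singleton 0)))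
    filter_upwards [hπ.ae_ae_of_ae hmeas ih, hπ.ae_eq_zero_of_isAbsorbing hEm hE]
      with x hnext hin hx
    refine (lintegral_congr_ae ?_).trans lintegral_zero
    filter_upwards [hnext, measure_eq_zero_iff_ae_notMem.1 (hin hx)] with y hy hyE
    simp [hyE, hy hyE]

theorem Stationary.measure_compl_eq_zero_of_isAbsorbing [IsMarkovKernel P] [IsFiniteMeasure π]
    (hπ : Stationary P π) (hEm : MeasurableSet E) (hE : IsAbsorbing P E)
    (hreach : ∀ x, 0 < hitProb P E x) : π Eᶜ = 0 := by
  refine measure_eq_zero_iff_ae_notMem.2 ?_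
  filter_upwards [ae_all_iff.2 (hπ.ae_hitLE_eq_zero_of_isAbsorbing hEm hE)] with x hx hxE
  exact (hreach x).ne' (iSup_eq_zero.2 fun n => hx n hxE)

end Absorbing

theorem isAbsorbing_setOf_entryProb_eq (P : Kernel X X) [IsMarkovKernel P] {A : Set X}
    (hA : MeasurableSet A) {β : ℝ≥0∞} (hβ : ∀ z, β ≤ entryProb P A z) (hβ_top : β ≠ ∞) :
    IsAbsorbing P {z | entryProb P A z = β} := fun x hx =>
  ae_eq_of_forall_le_of_lintegral_le (measurable_entryProb P hA) hβ_top hβ <| by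
    rw [← hitProb_eq_lintegral_entryProb P hA]
    exact (hitProb_le_entryProb P x).trans_eq hx

theorem lintegral_entryProb_le_iInf_hitProb (P : Kernel X X) [IsMarkovKernel P] {A C : Set X}
    (hA : MeasurableSet A) (hC : C.Nonempty) {ε : ℝ≥0∞} (hε : ε ≠ 0) {ν : Measure X}
    [IsProbabilityMeasure ν] (hsmall : ∀ x ∈ C, ε • ν ≤ P x)
    (hβ : ∀ z, ⨅ y ∈ C, hitProb P A y ≤ entryProb P A z) :
    ∫⁻ z, entryProb P A z ∂ν ≤ ⨅ y ∈ C, hitProb P A y := by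
  set β := ⨅ y ∈ C, hitProb P A y
  obtain ⟨y₀, hy₀⟩ := hC
  have hβ_top : β ≠ ∞ :=
    ne_top_of_le_ne_top one_ne_top ((iInf₂_le y₀ hy₀).trans (hitProb_le_one P y₀))
  have hε_top : ε ≠ ∞ := by
    have := (hsmall y₀ hy₀) univ
    simp only [Measure.smul_apply, measure_univ, smul_eq_mul, mul_one] at this
    exact ne_top_of_le_ne_top one_ne_top this
  have hsplit : β + ε * ∫⁻ z, entryProb P A z ∂ν ≤ β + ε * β :=
    calc _ ≤ ⨅ y ∈ C, (hitProb P A y + ε * β) := le_iInf₂ fun y hy => by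
          rw [hitProb_eq_lintegral_entryProb P hA]
          exact add_mul_lintegral_le_of_smul_le (hsmall y hy) hβ
      _ = β + ε * β := by simp only [β, ENNReal.iInf_add]
  exact (ENNReal.mul_le_mul_iff_right hε hε_top).1 ((ENNReal.add_le_add_iff_left hβ_top).1 hsplit)

end MCMCHarris

/-- Proposition 7. If a ϕ-irreducible Markov kernel with stationary
probability distribution `π` has a small set `C` (i.e. `π C > 0` and `P(x, ·) ≥ ε ν(·)` on `C`
for some `ε > 0` and probability measure `ν`) which is visited infinitely often with
probability one from every starting point, then the chain is Harris recurrent. -/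
theorem prop7_small_set_harris {X : Type*} [MeasurableSpace X]
    (P : Kernel X X) [IsMarkovKernel P] (π : Measure X) [IsProbabilityMeasure π]
    (hstat : Stationary P π) (hirr : PhiIrreducibleOn P Set.univ)
    (C : Set X) (hC : MeasurableSet C) (hCpos : 0 < π C)
    (ε : ℝ≥0∞) (hε : 0 < ε) (ν : Measure X) [IsProbabilityMeasure ν]
    (hsmall : ∀ x ∈ C, ∀ A : Set X, MeasurableSet A → ε * ν A ≤ P x A)
    (hio : ∀ x, ioProb P C x = 1) :
    HarrisRecurrentOn P π Set.univ := by
  obtain ⟨φ, -, hφ⟩ := hirr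
  intro A hA hApos x _
  set β := ⨅ y ∈ C, hitProb P A y
  have hβ_hit (z : X) : β ≤ hitProb P A z := by
    have hCz : hitProb P C z = 1 :=
      le_antisymm (hitProb_le_one P z) ((hio z).ge.trans (ioProb_le_hitProb P hC z))
    simpa [hCz] using mul_hitProb_le_hitProb P hA (C := C) (fun y hy => iInf₂_le y hy) z
  have hβ (z : X) : β ≤ entryProb P A z := (hβ_hit z).trans (hitProb_le_entryProb P z)
  obtain ⟨y₀, hy₀⟩ := nonempty_of_measure_ne_zero hCpos.ne'
  have hβ_top : β ≠ ∞ :=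
    ne_top_of_le_ne_top one_ne_top ((iInf₂_le y₀ hy₀).trans (hitProb_le_one P y₀))
  have hνβ : ∫⁻ z, entryProb P A z ∂ν ≤ β :=
    lintegral_entryProb_le_iInf_hitProb P hA ⟨y₀, hy₀⟩ hε.ne'
      (fun y hy => Measure.le_iff.2 fun s hs => by simpa using hsmall y hy s hs) hβ
  refine le_antisymm (hitProb_le_one P x) (le_trans ?_ (hβ_hit x))
  by_contra! hβ1
  set E := {z | entryProb P A z = β}
  have hEm : MeasurableSet E := measurable_entryProb P hA (measurableSet_singleton β)
  have hE := isAbsorbing_setOf_entryProb_eq P hA hβ hβ_top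
  have hνE : ∀ᵐ z ∂ν, z ∈ E :=
    ae_eq_of_forall_le_of_lintegral_le (measurable_entryProb P hA) hβ_top hβ hνβ
  have hπE := hstat.measure_compl_eq_zero_of_isAbsorbing hEm hE fun z =>
    hφ.2 z trivial E hEm (hφ.measure_pos_of_isAbsorbing hEm hE hνE.exists)
  have hAE : A ⊆ Eᶜ := fun z hz hzE => hβ1.ne' ((entryProb_of_mem P hz).symm.trans hzE)
  exact hApos.ne' (measure_mono_null hAE hπE)
end

section
/- Let X = [0, 1] and define a Markov transition kernel P on X as follows: if x = 1/m for a positive integer m, then P(x, ·) = x² · Uniform[0,1] + (1 − x²) · δ_{1/(m+1)}; for all other x, P(x, ·) = Uniform[0,1]. Then the Uniform[0,1] distribution is stationary for P, the chain is ϕ-irreducible with respect to Uniform[0,1] and aperiodic, and for every integer m ≥ 2, the probability that X_n = 1/(m+n) for all n ≥ 1 given X_0 = 1/m equals ∏_{j=m}^{∞} (1 − 1/j²), which is strictly positive; consequently ‖P^n(1/m, ·) − Uniform[0,1]‖ does not converge to 0 for any m ≥ 2. -/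
open MeasureTheory ProbabilityTheory Filter Set ENNReal

open MCMCHarris MeasureTheory ProbabilityTheory Filter Set ENNReal

/-- The Uniform[0,1] distribution, viewed as a measure on the state space `[0,1]`. -/
noncomputable def unif01 : Measure (Set.Icc (0 : ℝ) 1) :=
  Measure.comap Subtype.val volume

/-! The reciprocals `1 / m` form a countable, hence uniformly null, set off which `P x` is the
uniform law `π`; so `π` is stationary. Every `P x` dominates a positive multiple of `π`, which
gives `π`-irreducibility and rules out cycles of length `≥ 2`: from `x ∈ C 0` the chain would
avoid `C 0` almost surely, hence `π (C 0) = 0`.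

From `1 / j` the chain steps to `1 / (j + 1)` with probability `1 - 1 / j ^ 2`, so it follows
the path `n ↦ 1 / (m + n)` forever with probability `∏_{j ≥ m} (1 - 1 / j ^ 2) = (m - 1) / m`
(the product telescopes). For every `n` the law `Pⁿ(1 / m, ·)` puts at least this mass on the
countable, `π`-null range of the path, so its total variation distance to `π` stays bounded
away from `0`. -/

lemma ENNReal.tprod_eq_iInf_prod_range {f : ℕ → ℝ≥0∞} (hf : ∀ n, f n ≤ 1) :
    ∏' n, f n = ⨅ N, ∏ n ∈ Finset.range N, f n :=
  tendsto_nhds_unique (ENNReal.multipliable_of_le_one hf).hasProd.tendsto_prod_nat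
    (tendsto_atTop_iInf fun _ _ hNM => Finset.prod_anti_set_of_le_one' hf (Finset.range_mono hNM))

namespace MCMCHarris

variable {X : Type*} [MeasurableSpace X]

instance (P : Kernel X X) [IsMarkovKernel P] (n : ℕ) : IsMarkovKernel (iterK P n) := by
  induction n with
  | zero => rw [iterK]; infer_instance
  | succ n ih => rw [iterK]; infer_instance

lemma stationary_of_ae_eq {P : Kernel X X} {π : Measure X} [IsProbabilityMeasure π]
    (h : ∀ᵐ x ∂π, P x = π) : Stationary P π := by
  intro A _
  rw [lintegral_congr_ae (h.mono fun x hx => by rw [hx]), lintegral_const, measure_univ, mul_one]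

lemma hitLE_one (P : Kernel X X) {A : Set X} (hA : MeasurableSet A) (x : X) :
    hitLE P A 1 x = P x A := by
  have h : ∀ y, A.indicator (fun _ => 1) y + Aᶜ.indicator (hitLE P A 0) y = A.indicator 1 y :=
    fun y => by simp [hitLE, Set.indicator]
  change ∫⁻ y, _ ∂(P x) = P x A
  rw [lintegral_congr h, lintegral_indicator_one hA]

lemma apply_le_hitProb (P : Kernel X X) {A : Set X} (hA : MeasurableSet A) (x : X) :
    P x A ≤ hitProb P A x :=
  hitLE_one P hA x ▸ le_iSup (fun n => hitLE P A n x) 1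

lemma irreducibleOn_of_absolutelyContinuous {P : Kernel X X} {φ : Measure X} {S : Set X}
    (hφ : φ ≠ 0) (h : ∀ x ∈ S, φ ≪ P x) : IrreducibleOn P φ S :=
  ⟨hφ, fun x hx _ hA hφA =>
    (pos_iff_ne_zero.2 fun hPA => hφA.ne' (h x hx hPA)).trans_le (apply_le_hitProb P hA x)⟩

lemma hasCycle_one (P : Kernel X X) [IsMarkovKernel P] {π : Measure X} (hπ : π ≠ 0) :
    HasCycle P π 1 :=
  ⟨fun _ => univ, fun _ _ => MeasurableSet.univ, fun i hi j hj hij => by omega,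
    fun _ _ => Measure.measure_univ_pos.2 hπ, fun _ _ x _ => measure_univ⟩

lemma not_hasCycle_of_absolutelyContinuous {P : Kernel X X} [IsMarkovKernel P] {π : Measure X}
    (h : ∀ x, π ≪ P x) {D : ℕ} (hD : 2 ≤ D) : ¬ HasCycle P π D := by
  rintro ⟨C, hmeas, hdisj, hpos, hcyc⟩
  obtain ⟨x, hx⟩ := nonempty_of_measure_ne_zero (hpos 0 (by omega)).ne'
  have hstep : P x (C 1) = 1 := by
    simpa [Nat.mod_eq_of_lt (show 1 < D by omega)] using hcyc 0 (by omega) x hx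
  have hout : P x (C 1)ᶜ = 0 := (prob_compl_eq_zero_iff (hmeas 1 (by omega))).2 hstep
  have hsub : C 0 ⊆ (C 1)ᶜ :=
    (hdisj 0 (by omega) 1 (by omega) zero_ne_one).subset_compl_right
  exact (hpos 0 (by omega)).ne' (measure_mono_null hsub (h x hout))

lemma aperiodic_of_absolutelyContinuous {P : Kernel X X} [IsMarkovKernel P] {π : Measure X}
    (hπ : π ≠ 0) (h : ∀ x, π ≪ P x) : Aperiodic P π :=
  ⟨one_pos, hasCycle_one P hπ, fun _ _ hD => not_lt.1 fun hlt =>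
    not_hasCycle_of_absolutelyContinuous h hlt hD⟩

lemma pathProb_eq_tprod (P : Kernel X X) [IsMarkovKernel P] (g : ℕ → X) :
    pathProb P g = ∏' n, P (g n) {g (n + 1)} :=
  (ENNReal.tprod_eq_iInf_prod_range fun _ => prob_le_one).symm

lemma prod_le_iterK_apply_singleton (P : Kernel X X) [MeasurableSingletonClass X] (n : ℕ)
    (g : ℕ → X) : ∏ i ∈ Finset.range n, P (g i) {g (i + 1)} ≤ iterK P n (g 0) {g n} := by
  induction n generalizing g with
  | zero => simp [iterK, Kernel.id_apply]
  | succ n ih =>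
    calc ∏ i ∈ Finset.range (n + 1), P (g i) {g (i + 1)}
        = (∏ i ∈ Finset.range n, P (g (i + 1)) {g (i + 1 + 1)}) * P (g 0) {g 1} :=
          Finset.prod_range_succ' _ n
      _ ≤ iterK P n (g 1) {g (n + 1)} * P (g 0) {g 1} := by gcongr; exact ih (fun i => g (i + 1))
      _ = ∫⁻ y, ({g 1} : Set X).indicator (fun _ => iterK P n (g 1) {g (n + 1)}) y
            ∂(P (g 0)) := by
          rw [lintegral_indicator_const (measurableSet_singleton _)]
      _ ≤ ∫⁻ y, iterK P n y {g (n + 1)} ∂(P (g 0)) :=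
          lintegral_mono (Set.indicator_le fun y hy => by rw [Set.mem_singleton_iff.1 hy])
      _ = iterK P (n + 1) (g 0) {g (n + 1)} :=
          (Kernel.comp_apply' _ _ _ (measurableSet_singleton _)).symm

lemma pathProb_le_iterK_apply_singleton (P : Kernel X X) [MeasurableSingletonClass X] (n : ℕ)
    (g : ℕ → X) : pathProb P g ≤ iterK P n (g 0) {g n} :=
  (iInf_le _ n).trans (prod_le_iterK_apply_singleton P n g)

lemma abs_sub_le_tvDist (μ ν : Measure X) [IsProbabilityMeasure μ] [IsProbabilityMeasure ν]
    {A : Set X} (hA : MeasurableSet A) : |(μ A).toReal - (ν A).toReal| ≤ tvDist μ ν := by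
  refine le_ciSup (f := fun A : {A : Set X // MeasurableSet A} =>
    |(μ A).toReal - (ν A).toReal|) ⟨1, ?_⟩ ⟨A, hA⟩
  rintro _ ⟨B, rfl⟩
  exact abs_sub_le_of_nonneg_of_le ENNReal.toReal_nonneg measureReal_le_one
    ENNReal.toReal_nonneg measureReal_le_one

lemma not_tendsto_tvDist_of_le_apply {μ : ℕ → Measure X} [∀ n, IsProbabilityMeasure (μ n)]
    {ν : Measure X} [IsProbabilityMeasure ν] {T : Set X} (hT : MeasurableSet T) (hνT : ν T = 0)
    {c : ℝ≥0∞} (hc : c ≠ 0) (h : ∀ n, c ≤ μ n T) :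
    ¬ Tendsto (fun n => tvDist (μ n) ν) atTop (nhds 0) := by
  have hc_top : c ≠ ∞ := ((h 0).trans prob_le_one).trans_lt one_lt_top |>.ne
  have hbound : ∀ n, c.toReal ≤ tvDist (μ n) ν := fun n =>
    calc c.toReal ≤ (μ n T).toReal := ENNReal.toReal_mono (measure_ne_top _ _) (h n)
      _ = |(μ n T).toReal - (ν T).toReal| := by simp [hνT]
      _ ≤ tvDist (μ n) ν := abs_sub_le_tvDist _ _ hT
  exact fun hlim => (ENNReal.toReal_pos hc hc_top).not_ge (ge_of_tendsto' hlim hbound)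

lemma not_tendsto_tvDist_of_pathProb_pos [MeasurableSingletonClass X] (P : Kernel X X)
    [IsMarkovKernel P] (π : Measure X) [IsProbabilityMeasure π] [NullSingletonClass π]
    {g : ℕ → X} (hg : 0 < pathProb P g) :
    ¬ Tendsto (fun n => tvDist (iterK P n (g 0)) π) atTop (nhds 0) :=
  not_tendsto_tvDist_of_le_apply (countable_range g).measurableSet
    ((countable_range g).measure_zero π) hg.ne' fun n =>
      (pathProb_le_iterK_apply_singleton P n g).trans
        (measure_mono (singleton_subset_iff.2 (mem_range_self n)))

end MCMCHarris

open scoped unitInterval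

instance : IsProbabilityMeasure unif01 :=
  inferInstanceAs (IsProbabilityMeasure (volume : Measure I))

instance : NullSingletonClass unif01 :=
  inferInstanceAs (NullSingletonClass (volume : Measure I))

lemma countable_setOf_coe_eq_one_div_nat :
    {x : I | ∃ m : ℕ, 1 ≤ m ∧ (x : ℝ) = 1 / m}.Countable :=
  ((countable_range fun m : ℕ => (1 : ℝ) / m).preimage Subtype.val_injective).mono
    (by rintro x ⟨m, -, hm⟩; exact ⟨m, hm.symm⟩)

lemma one_div_mem_unitInterval {a : ℝ} (ha : 1 ≤ a) : 1 / a ∈ I :=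
  unitInterval.div_mem zero_le_one (by linarith) ha

lemma MeasureTheory.Measure.absolutelyContinuous_smul_add {X : Type*} [MeasurableSpace X]
    {μ ν : Measure X} {a : ℝ≥0∞} (ha : a ≠ 0) (b : ℝ≥0∞) : μ ≪ a • μ + b • ν :=
  (Measure.absolutelyContinuous_smul ha).trans
    (Measure.absolutelyContinuous_of_le (Measure.le_add_right le_rfl))

lemma one_sub_one_div_sq_eq_ofReal {k : ℕ} (hk : 1 ≤ k) :
    1 - 1 / (k : ℝ≥0∞) ^ 2 = ENNReal.ofReal (1 - (1 / (k : ℝ)) ^ 2) := by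
  have hk' : (0 : ℝ) < k := by exact_mod_cast hk
  rw [ENNReal.ofReal_sub _ (by positivity), ENNReal.ofReal_one, ENNReal.ofReal_pow (by positivity),
    one_div, one_div, ENNReal.ofReal_inv_of_pos hk', ENNReal.ofReal_natCast, ENNReal.inv_pow]

/-- Telescoping, from `1 - 1 / j ^ 2 = (j - 1) (j + 1) / j ^ 2`. -/
lemma mul_prod_one_sub_one_div_sq {m : ℝ} (hm : 0 < m) (N : ℕ) :
    m * (m + N - 1) * ∏ n ∈ Finset.range N, (1 - (1 / (m + n)) ^ 2) = (m - 1) * (m + N) := by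
  induction N with
  | zero => simp; ring
  | succ N ih =>
    have hmN : m + N ≠ 0 := by positivity
    rw [Finset.prod_range_succ, Nat.cast_succ]
    generalize ∏ n ∈ Finset.range N, (1 - (1 / (m + n)) ^ 2) = p at ih ⊢
    field_simp
    linear_combination (m + N) * (m + N + 1) * ih

lemma div_le_prod_one_sub_one_div_sq {m : ℝ} (hm : 1 < m) (N : ℕ) :
    (m - 1) / m ≤ ∏ n ∈ Finset.range N, (1 - (1 / (m + n)) ^ 2) := by
  have h := mul_prod_one_sub_one_div_sq (by linarith) N
  have hN : (0 : ℝ) ≤ N := N.cast_nonneg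
  rw [div_le_iff₀ (by linarith)]
  nlinarith

lemma tprod_one_sub_one_div_sq_pos {m : ℕ} (hm : 2 ≤ m) :
    0 < ∏' j : ℕ, (1 - 1 / (((m + j : ℕ) : ℝ≥0∞)) ^ 2) := by
  have hm' : (1 : ℝ) < m := by exact_mod_cast hm
  rw [ENNReal.tprod_eq_iInf_prod_range fun _ => tsub_le_self]
  refine (ENNReal.ofReal_pos.2 (by positivity : 0 < ((m : ℝ) - 1) / m)).trans_le
    (le_iInf fun N => ?_)
  rw [Finset.prod_congr rfl fun j _ => one_sub_one_div_sq_eq_ofReal (by omega : 1 ≤ m + j),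
    ← ENNReal.ofReal_prod_of_nonneg fun j _ => ?_]
  · exact ENNReal.ofReal_le_ofReal (by simpa using div_le_prod_one_sub_one_div_sq hm' N)
  · have h := one_div_mem_unitInterval (show (1 : ℝ) ≤ (m + j : ℕ) by exact_mod_cast (by omega))
    exact sub_nonneg.2 (pow_le_one₀ h.1 h.2)

/-- Example 4. On the state space `X = [0,1]`, for the Markov kernel with
`P(1/m, ·) = (1/m)² · Uniform[0,1] + (1 − (1/m)²) · δ_{1/(m+1)}` for positive integers `m`,
and `P(x, ·) = Uniform[0,1]` for all other `x`: Uniform[0,1] is stationary, the chain is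
ϕ-irreducible with respect to Uniform[0,1] and aperiodic, and from any start `1/m` with
`m ≥ 2` the probability of following the path `n ↦ 1/(m+n)` forever equals
`∏_{j=m}^∞ (1 − 1/j²) > 0`; consequently `‖Pⁿ(1/m,·) − Uniform[0,1]‖ ↛ 0` for `m ≥ 2`. -/
theorem example4_continuous_null_set
    (P : Kernel (Set.Icc (0 : ℝ) 1) (Set.Icc (0 : ℝ) 1)) [IsMarkovKernel P]
    (hPrecip : ∀ m : ℕ, 1 ≤ m → ∀ x : Set.Icc (0 : ℝ) 1, (x : ℝ) = 1 / m →
      ∀ y : Set.Icc (0 : ℝ) 1, (y : ℝ) = 1 / (m + 1) →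
        P x = ENNReal.ofReal ((x : ℝ) ^ 2) • unif01 +
          ENNReal.ofReal (1 - (x : ℝ) ^ 2) • Measure.dirac y)
    (hPother : ∀ x : Set.Icc (0 : ℝ) 1, (∀ m : ℕ, 1 ≤ m → (x : ℝ) ≠ 1 / m) →
      P x = unif01) :
    Stationary P unif01 ∧
    IrreducibleOn P unif01 Set.univ ∧
    Aperiodic P unif01 ∧
    (∀ m : ℕ, 2 ≤ m → ∀ g : ℕ → Set.Icc (0 : ℝ) 1, (∀ n, (g n : ℝ) = 1 / (m + n)) →
      pathProb P g = ∏' j : ℕ, (1 - 1 / (((m + j : ℕ) : ℝ≥0∞)) ^ 2) ∧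
      0 < pathProb P g) ∧
    (∀ m : ℕ, 2 ≤ m → ∀ x : Set.Icc (0 : ℝ) 1, (x : ℝ) = 1 / m →
      ¬ Tendsto (fun n => tvDist (iterK P n x) unif01) atTop (nhds 0)) := by
  have hae : ∀ᵐ x ∂unif01, P x = unif01 :=
    (countable_setOf_coe_eq_one_div_nat.ae_notMem unif01).mono fun x hx =>
      hPother x fun m hm hxm => hx ⟨m, hm, hxm⟩
  have hac : ∀ x, unif01 ≪ P x := by
    intro x
    rcases em (∃ m : ℕ, 1 ≤ m ∧ (x : ℝ) = 1 / m) with ⟨m, hm, hxm⟩ | hx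
    · have hy := one_div_mem_unitInterval (show (1 : ℝ) ≤ m + 1 by simp)
      rw [hPrecip m hm x hxm ⟨_, hy⟩ rfl]
      refine Measure.absolutelyContinuous_smul_add (ENNReal.ofReal_pos.2 ?_).ne' _
      rw [hxm]
      exact pow_pos (one_div_pos.2 (Nat.cast_pos.2 hm)) 2
    · rw [hPother x fun m hm hxm => hx ⟨m, hm, hxm⟩]
  have hpath : ∀ m : ℕ, 2 ≤ m → ∀ g : ℕ → I, (∀ n, (g n : ℝ) = 1 / (m + n)) →
      pathProb P g = ∏' j : ℕ, (1 - 1 / (((m + j : ℕ) : ℝ≥0∞)) ^ 2) ∧ 0 < pathProb P g := by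
    intro m hm g hg
    have hstep : ∀ n, P (g n) {g (n + 1)} = 1 - 1 / (((m + n : ℕ) : ℝ≥0∞)) ^ 2 := by
      intro n
      have hx : (g n : ℝ) = 1 / ((m + n : ℕ) : ℝ) := by rw [hg n]; push_cast; ring
      have hy : (g (n + 1) : ℝ) = 1 / (((m + n : ℕ) : ℝ) + 1) := by
        rw [hg (n + 1)]; push_cast; ring
      rw [hPrecip (m + n) (by omega) (g n) hx (g (n + 1)) hy, hx,
        one_sub_one_div_sq_eq_ofReal (by omega)]
      simp
    have h := pathProb_eq_tprod P g
    simp only [hstep] at h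
    exact ⟨h, h ▸ tprod_one_sub_one_div_sq_pos hm⟩
  refine ⟨stationary_of_ae_eq hae,
    irreducibleOn_of_absolutelyContinuous (IsProbabilityMeasure.ne_zero _) fun x _ => hac x,
    aperiodic_of_absolutelyContinuous (IsProbabilityMeasure.ne_zero _) hac, hpath, ?_⟩
  intro m hm x hx
  let g : ℕ → I := fun n => ⟨1 / (m + n), one_div_mem_unitInterval (by norm_cast; omega)⟩
  have hx0 : x = g 0 := Subtype.ext (by simp [hx, g])
  exact hx0 ▸ not_tendsto_tvDist_of_pathProb_pos P unif01 (hpath m hm g fun n => rfl).2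
end

section
/- In the Metropolis-within-Gibbs setting on an open set X ⊆ ℝ^d, let M_i(x, ·) denote the kernel of the i-th coordinate update conditional on moving, i.e., from the decomposition P_i(x, ·) = (1 − r_i(x)) M_i(x, ·) + r_i(x) δ_x(·). Let (i_1, i_2, …, i_n) be any sequence of coordinate directions in which each of the d coordinate directions appears at least once. Then the composed kernel M_{i_1} M_{i_2} ⋯ M_{i_n} is absolutely continuous with respect to d-dimensional Lebesgue measure λ: if A is Borel with λ(A) = 0, then (M_{i_1} M_{i_2} ⋯ M_{i_n})(x, A) = 0 for all x ∈ X. -/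
open MeasureTheory ProbabilityTheory Filter Set ENNReal

namespace MCMCHarris

open MeasureTheory ProbabilityTheory Filter Set ENNReal

/-- Composition of a list of kernels, applying the head of the list first. -/
noncomputable def compList {Y : Type*} [MeasurableSpace Y] : List (Kernel Y Y) → Kernel Y Y
  | [] => Kernel.id
  | κ :: ks => (compList ks).comp κ

/-- The law at each time of the (possibly time-inhomogeneous) Markov chain with transition
kernels `K 0, K 1, K 2, …` started at `y₀`. -/
noncomputable def chainLaw {Y : Type*} [MeasurableSpace Y] (K : ℕ → Kernel Y Y) (y₀ : Y) :
    ℕ → Measure Y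
  | 0 => Measure.dirac y₀
  | n + 1 => (chainLaw K y₀ n).bind (K n)

variable {d : ℕ}

/-- The Metropolis-within-Gibbs acceptance probability for updating coordinate `i` of `x`
to the value `z`: `min(1, f(y) q_i(y, xᵢ) / (f(x) q_i(x, z)))` where `y = update x i z`,
set to `1` when the denominator vanishes. -/
noncomputable def gibbsAlpha (f : (Fin d → ℝ) → ℝ) (q : Fin d → (Fin d → ℝ) → ℝ → ℝ)
    (i : Fin d) (x : Fin d → ℝ) (z : ℝ) : ℝ :=
  if f x * q i x z = 0 then 1
  else min 1 (f (Function.update x i z) * q i (Function.update x i z) (x i) /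
    (f x * q i x z))

/-- The sub-probability mass with which the Metropolis update of coordinate `i` from `x`
proposes **and accepts** a move into the set `A`. -/
noncomputable def moveMass (f : (Fin d → ℝ) → ℝ) (q : Fin d → (Fin d → ℝ) → ℝ → ℝ)
    (i : Fin d) (x : Fin d → ℝ) (A : Set (Fin d → ℝ)) : ℝ≥0∞ :=
  ∫⁻ z, A.indicator 1 (Function.update x i z) *
    ENNReal.ofReal (q i x z * gibbsAlpha f q i x z)

/-- The proposal densities `q_i` are symmetrically positive:
`q_i((x₁,…,y,…,x_d), z) > 0 ↔ q_i((x₁,…,z,…,x_d), y) > 0`. -/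
def SymPositive (q : Fin d → (Fin d → ℝ) → ℝ → ℝ) : Prop :=
  ∀ i : Fin d, ∀ x : Fin d → ℝ, ∀ y z : ℝ,
    0 < q i (Function.update x i y) z ↔ 0 < q i (Function.update x i z) y

end MCMCHarris

open MCMCHarris MeasureTheory ProbabilityTheory Filter Set ENNReal

/-!
Say that a measure `ν` is absolutely continuous along a set `S` of coordinates if it kills every
set whose sections in the `S`-coordinates (the others frozen) are all null. A point mass is so
along `∅`. From a point of `{f > 0}`, the move kernel `M_i` stays in `{f > 0}` and is absolutely
continuous with respect to Lebesgue measure on the line through that point in direction `i`,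
since `M_i(x, ·)` is the accepted-move mass normalised by its positive total. By Fubini, if `A`
is null along `insert i S`, then the points whose `i`-line meets `A` in positive measure form a
set null along `S`; so one more `M_i` step turns absolute continuity along `S` into absolute
continuity along `insert i S`. Once every coordinate has been updated, this is absolute
continuity with respect to Lebesgue measure.
-/

namespace MCMCHarris

open Function

theorem compList_append_singleton {Y : Type*} [MeasurableSpace Y] (l : List (Kernel Y Y))
    (κ : Kernel Y Y) : compList (l ++ [κ]) = κ ∘ₖ compList l := by
  induction l with
  | nil => simp [compList]
  | cons η l ih => simp [compList, ih, Kernel.comp_assoc]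

section ProductSlices

variable {ι : Type*} [Fintype ι] [DecidableEq ι] {X : ι → Type*} [∀ i, MeasurableSpace (X i)]
  (μ : ∀ i, Measure (X i))

def NullAlong (S : Finset ι) (A : Set (∀ i, X i)) : Prop :=
  ∀ w : ∀ i, X i, Measure.pi μ {v | S.piecewise v w ∈ A} = 0

def SliceAbsContOn (i : ι) (U : Set (∀ i, X i)) (κ : Kernel (∀ i, X i) (∀ i, X i)) : Prop :=
  ∀ y ∈ U, κ y Uᶜ = 0 ∧ κ y ≪ (μ i).map (update y i)

def AbsContAlong (U : Set (∀ i, X i)) (S : Finset ι) (ν : Measure (∀ i, X i)) : Prop :=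
  ν Uᶜ = 0 ∧ ∀ A, MeasurableSet A → NullAlong μ S A → ν A = 0

variable {μ}

theorem nullAlong_univ {A : Set (∀ i, X i)} (hA : Measure.pi μ A = 0) :
    NullAlong μ Finset.univ A :=
  fun _ => by simpa [Finset.piecewise_univ] using hA

variable [∀ i, SigmaFinite (μ i)]

theorem ae_measure_update_preimage_eq_zero {C : Set (∀ i, X i)} (hC : MeasurableSet C)
    (h0 : Measure.pi μ C = 0) (i : ι) :
    ∀ᵐ x ∂Measure.pi μ, μ i (update x i ⁻¹' C) = 0 := by
  set F : (∀ i, X i) → ℝ≥0∞ := C.indicator 1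
  have hF : Measurable F := measurable_one.indicator hC
  set g : (∀ i, X i) → ℝ≥0∞ := fun x => ∫⁻ y, F (update x i y) ∂μ i
  have hg : Measurable g := (hF.comp measurable_update').lintegral_prod_right'
  have hg_eq (x : ∀ i, X i) : g x = μ i (update x i ⁻¹' C) := by
    rw [← lintegral_indicator_one (measurable_update x hC)]
    rfl
  -- Tonelli: integrating `g` over the coordinates other than `i` already integrates `F`
  -- over the whole product.
  have hg_zero : ∫⁻ x, g x ∂Measure.pi μ = ∫⁻ _, 0 ∂Measure.pi μ := by
    refine lintegral_eq_of_lmarginal_eq Finset.univ hg measurable_const (funext fun x => ?_)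
    rw [lmarginal_erase g hg (Finset.mem_univ i), ← lmarginal_erase' F hF (Finset.mem_univ i)]
    simp [F, lintegral_indicator_one hC, h0]
  rw [lintegral_zero, lintegral_eq_zero_iff hg] at hg_zero
  filter_upwards [hg_zero] with x hx
  rwa [← hg_eq]

theorem NullAlong.notMem_of_empty [∀ i, NeZero (μ i)] {A : Set (∀ i, X i)}
    (hA : NullAlong μ ∅ A) (x : ∀ i, X i) : x ∉ A := by
  intro hx
  have huniv : Measure.pi μ Set.univ ≠ 0 := by
    rw [Measure.pi_univ]
    exact Finset.prod_ne_zero_iff.2 fun i _ => by simp [NeZero.ne (μ i)]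
  exact huniv (by simpa [Finset.piecewise_empty, hx] using hA x)

theorem NullAlong.of_insert {S : Finset ι} {i : ι} {A : Set (∀ i, X i)} (hA : MeasurableSet A)
    (hnull : NullAlong μ (insert i S) A) :
    NullAlong μ S {y | μ i (update y i ⁻¹' A) ≠ 0} := by
  intro w
  set C := {v : ∀ i, X i | (insert i S).piecewise v w ∈ A}
  have hC : MeasurableSet C := by
    refine measurable_pi_lambda _ (fun j => ?_) hA
    by_cases hj : j ∈ insert i S <;> simp [Finset.piecewise, hj, measurable_pi_apply]
  have hslice (v : ∀ i, X i) :
      update v i ⁻¹' C = update (S.piecewise v w) i ⁻¹' A := by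
    ext z
    simp only [C, Set.mem_preimage, Set.mem_ofPred, Finset.piecewise_insert, update_self]
    have hupd : update (S.piecewise (update v i z) w) i z = update (S.piecewise v w) i z := by
      ext j
      rcases eq_or_ne j i with rfl | hj <;> simp [Finset.piecewise, *]
    rw [hupd]
  refine measure_mono_null (fun v hv => ?_)
    (ae_iff.1 (ae_measure_update_preimage_eq_zero hC (hnull w) i))
  simpa [hslice] using hv

theorem absContAlong_dirac [∀ i, NeZero (μ i)] {U : Set (∀ i, X i)} (hU : MeasurableSet U)
    {x : ∀ i, X i} (hx : x ∈ U) : AbsContAlong μ U ∅ (Measure.dirac x) :=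
  ⟨by simp [Measure.dirac_apply' x hU.compl, hx],
    fun A hA hnull => by simp [Measure.dirac_apply' x hA, hnull.notMem_of_empty x]⟩

theorem AbsContAlong.bind {U : Set (∀ i, X i)} (hU : MeasurableSet U) {S : Finset ι}
    {ν : Measure (∀ i, X i)} (hν : AbsContAlong μ U S ν) {i : ι}
    {κ : Kernel (∀ i, X i) (∀ i, X i)} (hκ : SliceAbsContOn μ i U κ) :
    AbsContAlong μ U (insert i S) (ν.bind κ) := by
  have hU_ae : ∀ᵐ y ∂ν, y ∈ U := by
    simpa using measure_eq_zero_iff_ae_notMem.1 hν.1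
  refine ⟨?_, fun A hA hnull => ?_⟩
  · rw [Measure.bind_apply hU.compl κ.aemeasurable]
    refine (lintegral_congr_ae ?_).trans lintegral_zero
    filter_upwards [hU_ae] with y hy using (hκ y hy).1
  · set B := {y | μ i (update y i ⁻¹' A) ≠ 0}
    have hB : MeasurableSet B :=
      (measurable_measure_prodMk_left (measurable_update' hA) (measurableSet_singleton 0)).compl
    have hνB : ν B = 0 := hν.2 B hB (hnull.of_insert hA)
    rw [Measure.bind_apply hA κ.aemeasurable]
    refine (lintegral_congr_ae ?_).trans lintegral_zero
    filter_upwards [hU_ae, measure_eq_zero_iff_ae_notMem.1 hνB] with y hyU hyB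
    refine (hκ y hyU).2 ?_
    rw [Measure.map_apply (measurable_update y) hA]
    simpa [B] using hyB

theorem absContAlong_compList [∀ i, NeZero (μ i)] {U : Set (∀ i, X i)} (hU : MeasurableSet U)
    {M : ι → Kernel (∀ i, X i) (∀ i, X i)} (hM : ∀ i, SliceAbsContOn μ i U (M i)) (l : List ι)
    {x : ∀ i, X i} (hx : x ∈ U) : AbsContAlong μ U l.toFinset (compList (l.map M) x) := by
  induction l using List.reverseRecOn with
  | nil => simpa [compList, Kernel.id_apply] using absContAlong_dirac hU hx
  | append_singleton l i ih =>
    rw [List.map_append, List.map_singleton, compList_append_singleton, Kernel.comp_apply]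
    convert ih.bind hU (hM i) using 1
    ext
    simp

end ProductSlices

section MetropolisWithinGibbs

variable {d : ℕ} {f : (Fin d → ℝ) → ℝ} {q : Fin d → (Fin d → ℝ) → ℝ → ℝ} {i : Fin d}
  {x : Fin d → ℝ}

theorem measurable_gibbsAlpha (hf : Measurable f) (hq : Measurable (uncurry (q i)))
    (x : Fin d → ℝ) : Measurable (gibbsAlpha f q i x) := by
  have hqx : Measurable (q i x) := hq.comp measurable_prodMk_left
  have hu : Measurable (update x i) := measurable_update x
  have hnum : Measurable fun z => f (update x i z) * q i (update x i z) (x i) :=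
    (hf.comp hu).mul (hq.comp (hu.prodMk measurable_const))
  have hden : Measurable fun z => f x * q i x z := hqx.const_mul (f x)
  exact Measurable.ite (hden (measurableSet_singleton 0)) measurable_const
    (measurable_const.min (hnum.div hden))

theorem gibbsAlpha_pos (hsym : SymPositive q) (hx : 0 < f x) {z : ℝ}
    (hfz : 0 < f (update x i z)) (hqz : 0 < q i x z) : 0 < gibbsAlpha f q i x z := by
  have hq_back : 0 < q i (update x i z) (x i) := (hsym i x z (x i)).2 (by rwa [update_eq_self])
  unfold gibbsAlpha
  split_ifs
  · exact one_pos
  · exact lt_min one_pos (div_pos (mul_pos hfz hq_back) (mul_pos hx hqz))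

theorem mul_gibbsAlpha_eq_zero (hx : 0 < f x) {z : ℝ} (hfz : f (update x i z) = 0) :
    q i x z * gibbsAlpha f q i x z = 0 := by
  unfold gibbsAlpha
  split_ifs with h
  · simp [(mul_eq_zero.1 h).resolve_left hx.ne']
  · simp [hfz]

theorem moveMass_eq_zero {A : Set (Fin d → ℝ)}
    (h : ∀ᵐ z, update x i z ∈ A → q i x z * gibbsAlpha f q i x z ≤ 0) :
    moveMass f q i x A = 0 := by
  refine (lintegral_congr_ae ?_).trans lintegral_zero
  filter_upwards [h] with z hz
  by_cases hzA : update x i z ∈ A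
  · simp [ENNReal.ofReal_eq_zero.2 (hz hzA)]
  · simp [hzA]

theorem moveMass_univ_ne_zero (hf : Measurable f) (hq : Measurable (uncurry (q i)))
    (hsym : SymPositive q) (hx : 0 < f x)
    (hQX : 0 < ∫⁻ z in {z | 0 < f (update x i z)}, ENNReal.ofReal (q i x z)) :
    moveMass f q i x Set.univ ≠ 0 := by
  intro h0
  have hmeas : Measurable fun z => ENNReal.ofReal (q i x z * gibbsAlpha f q i x z) :=
    ((hq.comp measurable_prodMk_left).mul (measurable_gibbsAlpha hf hq x)).ennreal_ofReal
  have hU : MeasurableSet {z | 0 < f (update x i z)} :=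
    measurableSet_lt measurable_const (hf.comp (measurable_update x))
  simp only [moveMass, Set.indicator_univ, Pi.one_apply, one_mul] at h0
  rw [lintegral_eq_zero_iff hmeas] at h0
  refine hQX.ne' ((setLIntegral_eq_zero_iff hU
    (hq.comp measurable_prodMk_left).ennreal_ofReal).2 ?_)
  filter_upwards [h0] with z (hz : ENNReal.ofReal (q i x z * gibbsAlpha f q i x z) = 0) hzU
  show ENNReal.ofReal (q i x z) = 0
  refine ENNReal.ofReal_eq_zero.2 (not_lt.1 fun hqz => ?_)
  exact (ENNReal.ofReal_eq_zero.1 hz).not_gt (mul_pos hqz (gibbsAlpha_pos hsym hx hzU hqz))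

theorem sliceAbsContOn_of_moveMass (hf : Measurable f) (hf_nonneg : ∀ x, 0 ≤ f x)
    (hq : Measurable (uncurry (q i))) (hsym : SymPositive q)
    (hQX : ∀ x, 0 < f x → 0 < ∫⁻ z in {z | 0 < f (update x i z)}, ENNReal.ofReal (q i x z))
    {κ : Kernel (Fin d → ℝ) (Fin d → ℝ)}
    (hκ : ∀ x A, MeasurableSet A → moveMass f q i x Set.univ * κ x A = moveMass f q i x A) :
    SliceAbsContOn (fun _ => volume) i {x | 0 < f x} κ := by
  have hκ_zero {y : Fin d → ℝ} (hy : 0 < f y) {A : Set (Fin d → ℝ)} (hA : MeasurableSet A)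
      (h : moveMass f q i y A = 0) : κ y A = 0 :=
    (mul_eq_zero.1 ((hκ y A hA).trans h)).resolve_left
      (moveMass_univ_ne_zero hf hq hsym hy (hQX y hy))
  refine fun y hy => ⟨hκ_zero hy (measurableSet_lt measurable_const hf).compl
    (moveMass_eq_zero (.of_forall fun z hz => ?_)), .mk fun A hA hA0 => hκ_zero hy hA ?_⟩
  · have hfz : f (update y i z) = 0 := le_antisymm (not_lt.1 hz) (hf_nonneg _)
    exact (mul_gibbsAlpha_eq_zero hy hfz).le
  · rw [Measure.map_apply (measurable_update y) hA] at hA0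
    exact moveMass_eq_zero <|
      (measure_eq_zero_iff_ae_notMem.1 hA0).mono fun z hz hzA => absurd hzA hz

end MetropolisWithinGibbs

end MCMCHarris

theorem lem10_composed_move_kernels_abs_cont_general {d : ℕ}
    (f : (Fin d → ℝ) → ℝ) (hf_meas : Measurable f) (hf_nonneg : ∀ x, 0 ≤ f x)
    (q : Fin d → (Fin d → ℝ) → ℝ → ℝ)
    (hq_meas : ∀ i, Measurable (Function.uncurry (q i)))
    (hsym : SymPositive q)
    (hQX : ∀ (i : Fin d) (x : Fin d → ℝ), 0 < f x →
      0 < ∫⁻ z in {z | 0 < f (Function.update x i z)}, ENNReal.ofReal (q i x z))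
    (M : Fin d → Kernel (Fin d → ℝ) (Fin d → ℝ))
    (hM : ∀ (i : Fin d) (x : Fin d → ℝ) (A : Set (Fin d → ℝ)), MeasurableSet A →
      moveMass f q i x Set.univ * M i x A = moveMass f q i x A)
    (l : List (Fin d)) (hl : ∀ j : Fin d, j ∈ l) :
    ∀ x : Fin d → ℝ, 0 < f x → ∀ A : Set (Fin d → ℝ), MeasurableSet A →
      volume A = 0 → compList (l.map M) x A = 0 := by
  intro x hx A hA hvol
  have hU : MeasurableSet {x | 0 < f x} := measurableSet_lt measurable_const hf_meas
  have hmove := absContAlong_compList hU (fun i => sliceAbsContOn_of_moveMass hf_meas hf_nonneg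
    (hq_meas i) hsym (hQX i) (hM i)) l hx
  have hl_univ : l.toFinset = Finset.univ :=
    Finset.eq_univ_of_forall fun j => List.mem_toFinset.2 (hl j)
  rw [hl_univ] at hmove
  exact hmove.2 A hA (nullAlong_univ hvol)

/-- Lemma 10. In the Metropolis-within-Gibbs setting on the open set
`X = {x | f x > 0} ⊆ ℝ^d`, let `M i` be the kernel of the `i`-th coordinate update
conditional on moving. If `(i₁, …, iₙ)` is a sequence of coordinate directions in which every
one of the `d` directions appears, then the composed kernel `M_{i₁} ⋯ M_{iₙ}` is absolutely
continuous with respect to Lebesgue measure: it assigns mass `0` to every Lebesgue-null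
Borel set, from every starting point of `X`. -/
theorem lem10_composed_move_kernels_abs_cont {d : ℕ}
    (f : (Fin d → ℝ) → ℝ) (hf_meas : Measurable f) (hf_nonneg : ∀ x, 0 ≤ f x)
    (hopen : IsOpen {x | 0 < f x})
    (hf_int : ∫⁻ x, ENNReal.ofReal (f x) ≠ ∞)
    (q : Fin d → (Fin d → ℝ) → ℝ → ℝ)
    (hq_meas : ∀ i, Measurable (Function.uncurry (q i)))
    (hq_nonneg : ∀ i x z, 0 ≤ q i x z)
    (hq_int : ∀ i x, ∫⁻ z, ENNReal.ofReal (q i x z) = 1)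
    (hsym : SymPositive q)
    (hQX : ∀ (i : Fin d) (x : Fin d → ℝ), 0 < f x →
      0 < ∫⁻ z in {z | 0 < f (Function.update x i z)}, ENNReal.ofReal (q i x z))
    (M : Fin d → Kernel (Fin d → ℝ) (Fin d → ℝ)) [∀ i, IsMarkovKernel (M i)]
    (hM : ∀ (i : Fin d) (x : Fin d → ℝ) (A : Set (Fin d → ℝ)), MeasurableSet A →
      moveMass f q i x Set.univ * M i x A = moveMass f q i x A)
    (l : List (Fin d)) (hl : ∀ j : Fin d, j ∈ l) :
    ∀ x : Fin d → ℝ, 0 < f x → ∀ A : Set (Fin d → ℝ), MeasurableSet A →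
      volume A = 0 → compList (l.map M) x A = 0 :=
  lem10_composed_move_kernels_abs_cont_general f hf_meas hf_nonneg q hq_meas hsym hQX M hM l hl
end

section
/- Consider a Metropolis-within-Gibbs Markov chain {X_n} on an open set X ⊆ ℝ^d with target density f > 0. If A is a Borel set of Lebesgue measure 0, then for every initial state x_0 and every n, P[X_n ∈ A | X_0 = x_0] ≤ P[D_n], where D_n is the event that by time n the chain has not yet moved (i.e., accepted a proposal) at least once in each of the d coordinate directions. -/
/-! Record, alongside the position, the set `t` of directions in which a move has been accepted,
and call `B` `t`-null if for every `x` it is null for the product of Lebesgue measure in the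
directions of `t` and the point mass at `x` in the others. An accepted move in direction `i`
redraws that coordinate from a density, so it can only reach a `t`-null set from a set that is
null one flag earlier; a rejected move stays put. By induction on `n`, the law of `(Xₙ, tₙ)`
charges no `B × {t}` with `B` `t`-null. Once every direction has moved, `t`-null is Lebesgue null,
so `{Xₙ ∈ A}` is carried by `Dₙ` up to a null event. -/

open MeasureTheory ProbabilityTheory Filter Set ENNReal

open MCMCHarris MeasureTheory ProbabilityTheory Filter Set ENNReal

namespace MeasureTheory.Measure

theorem measurable_measure_update_preimage {ι α : Type*} [DecidableEq ι] [MeasurableSpace α]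
    (i : ι) (ν : Measure α) [SFinite ν] {B : Set (ι → α)} (hB : MeasurableSet B) :
    Measurable fun x : ι → α => ν (Function.update x i ⁻¹' B) :=
  measurable_measure_prodMk_left (measurable_update' hB)

section PiUpdate

variable {ι α : Type*} [Fintype ι] [DecidableEq ι] [MeasurableSpace α]
  (m : ι → Measure α) [∀ j, SigmaFinite (m j)] (i : ι) (ν : Measure α) [SigmaFinite ν]

instance sigmaFinite_update (j : ι) : SigmaFinite (Function.update m i ν j) := by
  rcases eq_or_ne j i with rfl | hj
  · rw [Function.update_self]; infer_instance
  · rw [Function.update_of_ne hj]; infer_instance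

variable [IsProbabilityMeasure (m i)]

theorem pi_update_eq_map :
    Measure.pi (Function.update m i ν) =
      ((Measure.pi m).prod ν).map fun p => Function.update p.1 i p.2 := by
  refine pi_eq fun s hs => ?_
  have hpre : (fun p : (ι → α) × α => Function.update p.1 i p.2) ⁻¹' univ.pi s =
      univ.pi (Function.update s i univ) ×ˢ s i := by
    ext ⟨x, z⟩
    simp only [mem_preimage, mem_univ_pi, mem_prod]
    refine ⟨fun h => ⟨fun j => ?_, by simpa using h i⟩, fun ⟨h, hz⟩ j => ?_⟩
    · rcases eq_or_ne j i with rfl | hj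
      · simp
      · simpa [Function.update_of_ne hj] using h j
    · rcases eq_or_ne j i with rfl | hj
      · simpa using hz
      · simpa [Function.update_of_ne hj] using h j
  have hm : ∀ j, m j (Function.update s i univ j) =
      Function.update (fun k => m k (s k)) i (m i univ) j :=
    Function.apply_update (fun j (S : Set α) => m j S) s i univ
  have hν : ∀ j, Function.update m i ν j (s j) =
      Function.update (fun k => m k (s k)) i (ν (s i)) j :=
    Function.apply_update (fun j (μ : Measure α) => μ (s j)) m i ν
  rw [map_apply measurable_update' (.univ_pi hs), hpre, prod_prod, pi_pi,
    Fintype.prod_congr _ _ hm, Fintype.prod_congr _ _ hν,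
    Finset.prod_update_of_mem (Finset.mem_univ i), Finset.prod_update_of_mem (Finset.mem_univ i),
    measure_univ, one_mul, mul_comm]

theorem pi_update_apply {B : Set (ι → α)} (hB : MeasurableSet B) :
    Measure.pi (Function.update m i ν) B = ∫⁻ x, ν (Function.update x i ⁻¹' B) ∂Measure.pi m := by
  rw [pi_update_eq_map m i ν, map_apply measurable_update' hB, prod_apply (measurable_update' hB)]
  rfl

theorem pi_update_apply_of_update_mem_iff {E : Set (ι → α)} (hE : MeasurableSet E)
    (hcyl : ∀ x z, Function.update x i z ∈ E ↔ x ∈ E) :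
    Measure.pi (Function.update m i ν) E = ν univ * Measure.pi m E := by
  have hslice : ∀ x, ν (Function.update x i ⁻¹' E) = E.indicator (fun _ => ν univ) x := by
    intro x
    by_cases hx : x ∈ E <;> simp [preimage, hcyl, hx]
  rw [pi_update_apply m i ν hE, lintegral_congr hslice, lintegral_indicator_const hE]

end PiUpdate

theorem pi_dirac {ι α : Type*} [Fintype ι] [MeasurableSpace α] (x : ι → α) :
    Measure.pi (fun j => (dirac (x j) : Measure α)) = dirac x := by
  refine pi_eq fun s hs => ?_
  rw [dirac_apply' x (.univ_pi hs)]
  simp_rw [dirac_apply' _ (hs _)]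
  by_cases h : x ∈ univ.pi s
  · simp_all
  · obtain ⟨j, hj⟩ : ∃ j, x j ∉ s j := by simpa using h
    rw [indicator_of_notMem h, eq_comm]
    exact Finset.prod_eq_zero (Finset.mem_univ j) (indicator_of_notMem hj _)

end MeasureTheory.Measure

namespace MCMCHarris

variable {d : ℕ}

/-- The chain runs on pairs `(x, t)`, where `t` records the coordinate directions in which a move
has been accepted so far, and `w n i` is the probability of selecting direction `i` at step `n`. -/
def IsFlaggedMwGKernel (f : (Fin d → ℝ) → ℝ) (q : Fin d → (Fin d → ℝ) → ℝ → ℝ)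
    (w : ℕ → Fin d → ℝ≥0∞)
    (K : ℕ → Kernel ((Fin d → ℝ) × (Fin d → Bool)) ((Fin d → ℝ) × (Fin d → Bool))) : Prop :=
  ∀ (n : ℕ) (x : Fin d → ℝ) (t : Fin d → Bool) (A : Set ((Fin d → ℝ) × (Fin d → Bool))),
    MeasurableSet A →
      K n (x, t) A = ∑ i, w n i *
        ((∫⁻ z, A.indicator 1 (Function.update x i z, Function.update t i true) *
            ENNReal.ofReal (q i x z * gibbsAlpha f q i x z)) +
          (1 - moveMass f q i x Set.univ) * A.indicator 1 (x, t))

noncomputable def flagMarginals (t : Fin d → Bool) (x : Fin d → ℝ) : Fin d → Measure ℝ :=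
  fun j => if t j then volume else Measure.dirac (x j)

instance sigmaFinite_flagMarginals (t : Fin d → Bool) (x : Fin d → ℝ) (j : Fin d) :
    SigmaFinite (flagMarginals t x j) := by
  unfold flagMarginals
  split_ifs <;> infer_instance

instance isProbabilityMeasure_flagMarginals_update_false (t : Fin d → Bool) (x : Fin d → ℝ)
    (i : Fin d) : IsProbabilityMeasure (flagMarginals (Function.update t i false) x i) := by
  simp only [flagMarginals, Function.update_self, Bool.false_eq_true, if_false]
  infer_instance

theorem flagMarginals_update (t : Fin d → Bool) (x : Fin d → ℝ) (i : Fin d) (b : Bool) :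
    Function.update (flagMarginals (Function.update t i b) x) i (flagMarginals t x i) =
      flagMarginals t x := by
  funext j
  rcases eq_or_ne j i with rfl | hj
  · simp
  · simp [flagMarginals, Function.update_of_ne hj]

theorem flagMarginals_update_true (t : Fin d → Bool) (x : Fin d → ℝ) (i : Fin d) :
    flagMarginals (Function.update t i true) x =
      Function.update (flagMarginals t x) i volume := by
  funext j
  rcases eq_or_ne j i with rfl | hj
  · simp [flagMarginals]
  · simp [flagMarginals, Function.update_of_ne hj]

theorem flagMarginals_false (x : Fin d → ℝ) :
    flagMarginals (fun _ => false) x = fun j => Measure.dirac (x j) := by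
  funext j
  simp [flagMarginals]

theorem flagMarginals_true (x : Fin d → ℝ) :
    flagMarginals (fun _ => true) x = fun _ => volume := by
  funext j
  simp [flagMarginals]

def IsFlagNull (t : Fin d → Bool) (B : Set (Fin d → ℝ)) : Prop :=
  ∀ x, Measure.pi (flagMarginals t x) B = 0

theorem IsFlagNull.slice {t : Fin d → Bool} {B : Set (Fin d → ℝ)} {i : Fin d}
    (hB : MeasurableSet B) (hnull : IsFlagNull (Function.update t i true) B) :
    IsFlagNull t {y | volume (Function.update y i ⁻¹' B) ≠ 0} := by
  intro x
  set E := {y : Fin d → ℝ | volume (Function.update y i ⁻¹' B) ≠ 0}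
  have hslice : Measurable fun y : Fin d → ℝ => volume (Function.update y i ⁻¹' B) :=
    Measure.measurable_measure_update_preimage i volume hB
  have hE : MeasurableSet E := hslice (measurableSet_singleton 0).compl
  have hcyl : ∀ y z, Function.update y i z ∈ E ↔ y ∈ E := fun y z => by
    have hidem : Function.update (Function.update y i z) i = Function.update y i :=
      funext fun w => Function.update_idem z w y
    change volume _ ≠ 0 ↔ _
    rw [hidem]
    rfl
  have hE_false : Measure.pi (flagMarginals (Function.update t i false) x) E = 0 := by
    have h := hnull x
    rw [← Function.update_idem false true t, flagMarginals_update_true,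
      Measure.pi_update_apply _ _ _ hB, lintegral_eq_zero_iff hslice] at h
    exact ae_iff.1 h
  rw [← flagMarginals_update t x i false, Measure.pi_update_apply_of_update_mem_iff _ _ _ hE hcyl,
    hE_false, mul_zero]

theorem IsFlaggedMwGKernel.apply_prod_singleton_eq_zero {f : (Fin d → ℝ) → ℝ}
    {q : Fin d → (Fin d → ℝ) → ℝ → ℝ} {w : ℕ → Fin d → ℝ≥0∞}
    {K : ℕ → Kernel ((Fin d → ℝ) × (Fin d → Bool)) ((Fin d → ℝ) × (Fin d → Bool))}
    (hK : IsFlaggedMwGKernel f q w K) (n : ℕ) {x : Fin d → ℝ} {t t' : Fin d → Bool}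
    {B : Set (Fin d → ℝ)} (hB : MeasurableSet B) (hstay : t = t' → x ∉ B)
    (hmove : ∀ i, Function.update t i true = t' → volume (Function.update x i ⁻¹' B) = 0) :
    K n (x, t) (B ×ˢ {t'}) = 0 := by
  rw [hK n x t _ (hB.prod (measurableSet_singleton t'))]
  refine Finset.sum_eq_zero fun i _ => ?_
  have hstayed : (B ×ˢ {t'}).indicator (1 : (Fin d → ℝ) × (Fin d → Bool) → ℝ≥0∞) (x, t) = 0 :=
    indicator_of_notMem (fun h : (x, t) ∈ B ×ˢ {t'} => hstay h.2 h.1) _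
  have hmissed : ∀ᵐ z, Function.update x i z ∉ B ∨ Function.update t i true ≠ t' := by
    by_cases ht : Function.update t i true = t'
    · filter_upwards [measure_eq_zero_iff_ae_notMem.1 (hmove i ht)] with z hz
      exact Or.inl hz
    · exact Eventually.of_forall fun _ => Or.inr ht
  have hmoved : ∫⁻ z, (B ×ˢ {t'}).indicator 1 (Function.update x i z, Function.update t i true) *
      ENNReal.ofReal (q i x z * gibbsAlpha f q i x z) = 0 := by
    refine (lintegral_congr_ae ?_).trans lintegral_zero
    filter_upwards [hmissed] with z hz
    rw [indicator_of_notMem (fun h => hz.elim (· h.1) (· h.2)), zero_mul]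
  rw [hstayed, hmoved, mul_zero, add_zero, mul_zero]

theorem IsFlaggedMwGKernel.chainLaw_prod_singleton_eq_zero {f : (Fin d → ℝ) → ℝ}
    {q : Fin d → (Fin d → ℝ) → ℝ → ℝ} {w : ℕ → Fin d → ℝ≥0∞}
    {K : ℕ → Kernel ((Fin d → ℝ) × (Fin d → Bool)) ((Fin d → ℝ) × (Fin d → Bool))}
    (hK : IsFlaggedMwGKernel f q w K) (x₀ : Fin d → ℝ) (n : ℕ) {t : Fin d → Bool}
    {B : Set (Fin d → ℝ)} (hB : MeasurableSet B) (hnull : IsFlagNull t B) :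
    chainLaw K (x₀, fun _ => false) n (B ×ˢ {t}) = 0 := by
  induction n generalizing t B with
  | zero =>
    rw [chainLaw, Measure.dirac_apply' _ (hB.prod (measurableSet_singleton t))]
    refine indicator_of_notMem (fun hmem => ?_) _
    obtain ⟨hx₀, ht : (fun _ => false) = t⟩ := mem_prod.1 hmem
    have h := hnull x₀
    rw [← ht, flagMarginals_false, Measure.pi_dirac, Measure.dirac_apply_of_mem hx₀] at h
    exact one_ne_zero h
  | succ n ih =>
    set bad : (Fin d → Bool) → Set (Fin d → ℝ) := fun s =>
      {x | s = t ∧ x ∈ B} ∪ ⋃ i, {x | Function.update s i true = t ∧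
        volume (Function.update x i ⁻¹' B) ≠ 0}
    have hbad_meas : ∀ s, MeasurableSet (bad s) := fun s =>
      ((MeasurableSet.const _).inter hB).union <| .iUnion fun i => (MeasurableSet.const _).inter <|
        Measure.measurable_measure_update_preimage i volume hB (measurableSet_singleton 0).compl
    have hbad_null : ∀ s, IsFlagNull s (bad s) := by
      intro s x
      refine measure_union_null ?_ (measure_iUnion_null fun i => ?_)
      · by_cases hs : s = t
        · subst hs
          exact measure_mono_null (fun y hy => hy.2) (hnull x)
        · simp [hs]
      · by_cases hs : Function.update s i true = t
        · subst hs
          exact measure_mono_null (fun y hy => hy.2) (hnull.slice hB x)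
        · simp [hs]
    have hK_off_bad : ∀ p ∉ ⋃ s, bad s ×ˢ {s}, K n p (B ×ˢ {t}) = 0 := by
      rintro ⟨x, s⟩ hp
      have hx : x ∉ bad s := fun hx => hp (mem_iUnion.2 ⟨s, hx, rfl⟩)
      refine hK.apply_prod_singleton_eq_zero n hB (fun hs hxB => hx (.inl ⟨hs, hxB⟩))
        fun i hs => ?_
      by_contra hvol
      exact hx (.inr (mem_iUnion.2 ⟨i, hs, hvol⟩))
    have hae : ∀ᵐ p ∂chainLaw K (x₀, fun _ => false) n, K n p (B ×ˢ {t}) = 0 :=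
      measure_mono_null (fun p hp => by_contra fun h => hp (hK_off_bad p h))
        (measure_iUnion_null fun s => ih (hbad_meas s) (hbad_null s))
    rw [chainLaw, Measure.bind_apply (hB.prod (measurableSet_singleton t))
      (K n).measurable.aemeasurable]
    exact (lintegral_congr_ae hae).trans lintegral_zero

end MCMCHarris

theorem cor11_null_sets_dominated_by_Dn_general {d : ℕ}
    (f : (Fin d → ℝ) → ℝ)
    (q : Fin d → (Fin d → ℝ) → ℝ → ℝ)
    (w : ℕ → Fin d → ℝ≥0∞)
    (K : ℕ → Kernel ((Fin d → ℝ) × (Fin d → Bool)) ((Fin d → ℝ) × (Fin d → Bool)))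
    (hK : ∀ (n : ℕ) (x : Fin d → ℝ) (t : Fin d → Bool)
        (A : Set ((Fin d → ℝ) × (Fin d → Bool))), MeasurableSet A →
      K n (x, t) A = ∑ i, w n i *
        ((∫⁻ z, A.indicator 1 (Function.update x i z, Function.update t i true) *
            ENNReal.ofReal (q i x z * gibbsAlpha f q i x z)) +
          (1 - moveMass f q i x Set.univ) * A.indicator 1 (x, t))) :
    ∀ A : Set (Fin d → ℝ), MeasurableSet A → volume A = 0 →
      ∀ x₀ : Fin d → ℝ, 0 < f x₀ → ∀ n : ℕ,
        chainLaw K (x₀, fun _ => false) n {p | p.1 ∈ A} ≤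
          chainLaw K (x₀, fun _ => false) n {p | p.2 ≠ fun _ => true} := by
  intro A hA hA_null x₀ _ n
  have hflag_null : IsFlagNull (fun _ => true) A := fun x => by
    rwa [flagMarginals_true, ← volume_pi]
  have hmoved_null := IsFlaggedMwGKernel.chainLaw_prod_singleton_eq_zero hK x₀ n hA hflag_null
  calc chainLaw K (x₀, fun _ => false) n {p | p.1 ∈ A}
      = chainLaw K (x₀, fun _ => false) n ({p | p.1 ∈ A} \ A ×ˢ {fun _ => true}) :=
        (measure_sdiff_null hmoved_null).symm
    _ ≤ chainLaw K (x₀, fun _ => false) n {p | p.2 ≠ fun _ => true} :=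
        measure_mono fun p hp ht => hp.2 ⟨hp.1, ht⟩

/-- Corollary 11. Consider a Metropolis-within-Gibbs chain on
`X = {x | f x > 0} ⊆ ℝ^d` whose coordinate-selection scheme at time `n` chooses direction `i`
with probability `w n i` (covering random-scan and deterministic-scan). Track, alongside the
position, which coordinate directions have been moved in so far. If `A` is a Borel set of
Lebesgue measure `0`, then for every initial state `x₀` and every `n`,
`P[Xₙ ∈ A | X₀ = x₀] ≤ P[Dₙ]`, where `Dₙ` is the event that by time `n` the chain has not
yet moved at least once in each of the `d` coordinate directions. -/
theorem cor11_null_sets_dominated_by_Dn {d : ℕ}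
    (f : (Fin d → ℝ) → ℝ) (hf_meas : Measurable f) (hf_nonneg : ∀ x, 0 ≤ f x)
    (hopen : IsOpen {x | 0 < f x})
    (hf_int : ∫⁻ x, ENNReal.ofReal (f x) ≠ ∞)
    (q : Fin d → (Fin d → ℝ) → ℝ → ℝ)
    (hq_meas : ∀ i, Measurable (Function.uncurry (q i)))
    (hq_nonneg : ∀ i x z, 0 ≤ q i x z)
    (hq_int : ∀ i x, ∫⁻ z, ENNReal.ofReal (q i x z) = 1)
    (hsym : SymPositive q)
    (hQX : ∀ (i : Fin d) (x : Fin d → ℝ), 0 < f x →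
      0 < ∫⁻ z in {z | 0 < f (Function.update x i z)}, ENNReal.ofReal (q i x z))
    (w : ℕ → Fin d → ℝ≥0∞) (hw : ∀ n, ∑ i, w n i = 1)
    (K : ℕ → Kernel ((Fin d → ℝ) × (Fin d → Bool)) ((Fin d → ℝ) × (Fin d → Bool)))
    [∀ n, IsMarkovKernel (K n)]
    (hK : ∀ (n : ℕ) (x : Fin d → ℝ) (t : Fin d → Bool)
        (A : Set ((Fin d → ℝ) × (Fin d → Bool))), MeasurableSet A →
      K n (x, t) A = ∑ i, w n i *
        ((∫⁻ z, A.indicator 1 (Function.update x i z, Function.update t i true) *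
            ENNReal.ofReal (q i x z * gibbsAlpha f q i x z)) +
          (1 - moveMass f q i x Set.univ) * A.indicator 1 (x, t))) :
    ∀ A : Set (Fin d → ℝ), MeasurableSet A → volume A = 0 →
      ∀ x₀ : Fin d → ℝ, 0 < f x₀ → ∀ n : ℕ,
        chainLaw K (x₀, fun _ => false) n {p | p.1 ∈ A} ≤
          chainLaw K (x₀, fun _ => false) n {p | p.2 ≠ fun _ => true} :=
  cor11_null_sets_dominated_by_Dn_general f q w K hK
end
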